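/- arXiv:2508.04831 — 2 statements merged into one kernel-verified Lean document; each statement's English description precedes it below -/
import Mathlib

section
/- Let R be a commutative ring with unit and f ∈ R a nonzero element. The quotient ring S = R[u,v]/(uv - f) is an integral domain if and only if R is an integral domain. -/
/-!
Send `u ↦ T` and `v ↦ f T⁻¹` into the Laurent polynomial ring `R[T, T⁻¹]`; this kills `uv - f`
and restricts to the identity on `R`, so `R` embeds in `S`, and `S` is a domain only if `R` is.
Conversely, using `uv = f` every class in `S` is represented by an `R`-combination of pure powers
`uᵃ` and `vᵇ`. Their images `Tᵃ` and `fᵇ T⁻ᵇ` live in pairwise distinct degrees, so when `R` is a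
domain and `f ≠ 0` a representative mapping to `0` is `0`: `S` embeds in the domain `R[T, T⁻¹]`.
-/

open MvPolynomial

/-- The suspension ring `S = R[u,v]/(uv - f)`. -/
abbrev Susp (R : Type*) [CommRing R] (f : R) : Type _ :=
  MvPolynomial (Fin 2) R ⧸
    Ideal.span {(X 0 * X 1 - C f : MvPolynomial (Fin 2) R)}

open LaurentPolynomial

namespace Susp

variable {R : Type*} [CommRing R] (f : R)

noncomputable def laurentEval : MvPolynomial (Fin 2) R →ₐ[R] R[T;T⁻¹] :=
  aeval ![T 1, LaurentPolynomial.C f * T (-1)]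

theorem laurentEval_monomial (s : Fin 2 →₀ ℕ) (r : R) :
    laurentEval f (monomial s r) = LaurentPolynomial.C (r * f ^ s 1) * T (s 0 - s 1) := by
  rw [laurentEval, aeval_monomial, Finsupp.prod_fintype _ _ fun _ => pow_zero _, Fin.prod_univ_two,
    ← LaurentPolynomial.C_eq_algebraMap]
  simp only [Matrix.cons_val_zero, Matrix.cons_val_one, Matrix.cons_val_fin_one, mul_pow, T_pow,
    map_mul, map_pow, mul_one, mul_neg_one, sub_eq_neg_add, T_add]
  ring

theorem laurentEval_eq_zero_of_mem {p : MvPolynomial (Fin 2) R}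
    (hp : p ∈ Ideal.span {X 0 * X 1 - MvPolynomial.C f}) : laurentEval f p = 0 := by
  obtain ⟨g, rfl⟩ := Ideal.mem_span_singleton'.1 hp
  simp [laurentEval]

def normalExponents : Set (Fin 2 →₀ ℕ) := {m | m 0 = 0 ∨ m 1 = 0}

theorem injOn_normalExponents :
    Set.InjOn (fun m : Fin 2 →₀ ℕ => (m 0 : ℤ) - m 1) normalExponents := by
  rintro m hm n hn h
  simp only [normalExponents, Set.mem_ofPred_eq] at hm hn h
  exact Finsupp.ext <| Fin.forall_fin_two.2 ⟨by omega, by omega⟩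

theorem exists_eq_add_of_mem_normalExponents (s : Fin 2 →₀ ℕ) :
    ∃ s' ∈ normalExponents, ∃ k, s = s' + (Finsupp.single 0 k + Finsupp.single 1 k) := by
  let k := min (s 0) (s 1)
  refine ⟨s - (Finsupp.single 0 k + Finsupp.single 1 k), ?_, k, ?_⟩
  · simp only [normalExponents, Set.mem_ofPred_eq, Finsupp.coe_tsub, Finsupp.coe_add, Pi.sub_apply,
      Pi.add_apply, Finsupp.single_eq_same, Finsupp.single_eq_of_ne, ne_eq, zero_ne_one,
      one_ne_zero, not_false_eq_true, add_zero, zero_add]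
    omega
  · exact Finsupp.ext <| Fin.forall_fin_two.2 ⟨by simp [k], by simp [k]⟩

theorem mk_mul_X_mul_X_pow (p : MvPolynomial (Fin 2) R) (k : ℕ) :
    Ideal.Quotient.mk (Ideal.span {X 0 * X 1 - MvPolynomial.C f}) (p * (X 0 * X 1) ^ k) =
      Ideal.Quotient.mk _ (MvPolynomial.C (f ^ k) * p) := by
  refine Ideal.Quotient.mk_eq_mk_iff_sub_mem _ _ |>.2 <| Ideal.mem_span_singleton.2 ?_
  rw [map_pow, mul_comm _ p, ← mul_sub]
  exact dvd_mul_of_dvd_right (sub_dvd_pow_sub_pow _ _ k) p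

theorem monomial_add_single_single (s : Fin 2 →₀ ℕ) (k : ℕ) (r : R) :
    monomial (s + (Finsupp.single 0 k + Finsupp.single 1 k)) r =
      monomial s r * (X 0 * X 1) ^ k := by
  rw [mul_pow, X_pow_eq_monomial, X_pow_eq_monomial, monomial_mul, monomial_mul, mul_one, mul_one]

theorem exists_mk_eq_mk_mem_restrictSupport (p : MvPolynomial (Fin 2) R) :
    ∃ q ∈ restrictSupport R normalExponents,
      Ideal.Quotient.mk (Ideal.span {X 0 * X 1 - MvPolynomial.C f}) p = Ideal.Quotient.mk _ q := by
  induction p using MvPolynomial.induction_on' with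
  | monomial s r =>
    obtain ⟨s', hs', k, rfl⟩ := exists_eq_add_of_mem_normalExponents s
    refine ⟨monomial s' (f ^ k * r), by simp [hs'], ?_⟩
    rw [monomial_add_single_single, mk_mul_X_mul_X_pow, C_mul_monomial]
  | add p q hp hq =>
    obtain ⟨p', hp', hpp'⟩ := hp
    obtain ⟨q', hq', hqq'⟩ := hq
    exact ⟨p' + q', add_mem hp' hq', by rw [map_add, map_add, hpp', hqq']⟩

theorem coeff_laurentEval {q : MvPolynomial (Fin 2) R}
    (hq : q ∈ restrictSupport R normalExponents) {s : Fin 2 →₀ ℕ} (hs : s ∈ normalExponents) :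
    (laurentEval f q).coeff (s 0 - s 1) = coeff s q * f ^ s 1 := by
  classical
  rw [mem_restrictSupport_iff] at hq
  conv_lhs => rw [q.as_sum, map_sum]
  simp only [laurentEval_monomial, ← single_eq_C_mul_T, AddMonoidAlgebra.coeff_sum,
    Finset.sum_apply', AddMonoidAlgebra.coeff_single, Finsupp.single_apply]
  rw [Finset.sum_congr rfl fun m (hm : m ∈ q.support) =>
    if_congr (injOn_normalExponents.eq_iff (hq hm) hs) rfl rfl, Finset.sum_ite_eq']
  split_ifs with h
  · rfl
  · rw [notMem_support_iff.1 h, zero_mul]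

theorem eq_zero_of_laurentEval_eq_zero [IsDomain R] (hf : f ≠ 0) {q : MvPolynomial (Fin 2) R}
    (hq : q ∈ restrictSupport R normalExponents) (h : laurentEval f q = 0) : q = 0 := by
  ext s
  by_cases hs : s ∈ normalExponents
  · have hcoeff := coeff_laurentEval f hq hs
    rw [h, AddMonoidAlgebra.coeff_zero, Finsupp.coe_zero, Pi.zero_apply, eq_comm] at hcoeff
    simpa [hf] using hcoeff
  · exact notMem_support_iff.1 fun hs' => hs ((mem_restrictSupport_iff R).1 hq hs')

noncomputable def toLaurent : Susp R f →ₐ[R] R[T;T⁻¹] :=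
  Ideal.Quotient.liftₐ _ (laurentEval f) fun _ => laurentEval_eq_zero_of_mem f

theorem algebraMap_injective : Function.Injective (algebraMap R (Susp R f)) := by
  refine .of_comp (f := toLaurent f) ?_
  rw [← AlgHom.coe_toRingHom, ← RingHom.coe_comp, AlgHom.comp_algebraMap]
  exact FaithfulSMul.algebraMap_injective R R[T;T⁻¹]

theorem toLaurent_injective [IsDomain R] (hf : f ≠ 0) : Function.Injective (toLaurent f) := by
  refine (injective_iff_map_eq_zero _).2 fun a ha => ?_
  obtain ⟨p, rfl⟩ := Ideal.Quotient.mk_surjective a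
  obtain ⟨q, hq, hpq⟩ := exists_mk_eq_mk_mem_restrictSupport f p
  rw [hpq] at ha ⊢
  rw [eq_zero_of_laurentEval_eq_zero f hf hq ha, map_zero]

end Susp

/-- For nonzero `f`, the ring `S = R[u,v]/(uv - f)` is an integral domain
if and only if `R` is an integral domain. -/
theorem suspension_isDomain_iff (R : Type*) [CommRing R] (f : R) (hf : f ≠ 0) :
    IsDomain (Susp R f) ↔ IsDomain R :=
  ⟨fun _ => (Susp.algebraMap_injective f).isDomain _,
    fun _ => (Susp.toLaurent_injective f hf).isDomain _⟩
end

section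
/- Let R be an integral domain, f ∈ R nonzero non-invertible, and a ∈ R. If the image of a in S = R[u,v]/(uv - f) is irreducible in S, then a is irreducible in R. -/
open MvPolynomial

/-- The image of the variable `u` in `S`. -/
noncomputable abbrev suspU (R : Type*) [CommRing R] (f : R) : Susp R f :=
  Ideal.Quotient.mk _ (X 0)

/-- The image of the variable `v` in `S`. -/
noncomputable abbrev suspV (R : Type*) [CommRing R] (f : R) : Susp R f :=
  Ideal.Quotient.mk _ (X 1)

/-- Evaluation `u ↦ 1`, `v ↦ f` gives a retraction `S → R`. -/
noncomputable def suspRetract (R : Type*) [CommRing R] (f : R) : Susp R f →+* R :=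
  Ideal.Quotient.lift _ (aeval (fun i : Fin 2 => if i = 0 then (1 : R) else f)).toRingHom
    (by
      intro x hx
      rw [Ideal.mem_span_singleton'] at hx
      obtain ⟨c, rfl⟩ := hx
      simp)

lemma suspRetract_algebraMap (R : Type*) [CommRing R] (f : R) (r : R) :
    suspRetract R f (algebraMap R (Susp R f) r) = r := by
  have : algebraMap R (Susp R f) r = Ideal.Quotient.mk _ (C r) := rfl
  rw [this]
  simp [suspRetract]

/-- If the image of `a ∈ R` in `S = R[u,v]/(uv - f)` is irreducible in `S`,
then `a` is irreducible in `R`. -/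
theorem irreducible_of_irreducible_suspension (R : Type*) [CommRing R] [IsDomain R]
    (f : R) (hf0 : f ≠ 0) (hf : ¬ IsUnit f) (a : R)
    (ha : Irreducible (algebraMap R (Susp R f) a)) :
    Irreducible a := by
  constructor
  · intro h
    exact ha.not_isUnit (h.map (algebraMap R (Susp R f)))
  · intro b c hbc
    have h2 : algebraMap R (Susp R f) a =
        algebraMap R (Susp R f) b * algebraMap R (Susp R f) c := by
      rw [hbc, map_mul]
    rcases ha.isUnit_or_isUnit h2 with h | h
    · left
      have := h.map (suspRetract R f)
      rwa [suspRetract_algebraMap] at this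
    · right
      have := h.map (suspRetract R f)
      rwa [suspRetract_algebraMap] at this
end
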